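/- For the simple walk, the function v₃ : ℤ² → ℝ defined for i,j ≥ 0 by v₃(i,j) = (i+1)(j+1)(317 + 16i³ + 4i⁴ + 168j + 100j² + 16j³ + 4j⁴ + 8i(21 + 4j + 2j²) + 4i²(25 + 4j + 2j²)) and v₃(i,j) = 0 otherwise, satisfies Δ²v₃ = 96·v₁, where v₁(i,j) = (i+1)(j+1) on the quadrant (extended by zero); in particular Δ³v₃ = 0 and Δ²v₃ ≠ 0, so v₃ is discrete polyharmonic of order exactly 3. -/

import Mathlib

/-!
Inside the quadrant, `v₃`, `Δv₃` and `Δ²v₃` are restrictions of polynomials that carry the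
factor `(x + 1)(y + 1)`, so they vanish on the lines `x = -1` and `y = -1`. The Dirichlet
boundary condition is therefore invisible to the Laplacian, and `Δ` can be computed on the
polynomials by plain algebra: `Δ` lowers the total degree by two, taking `v₃` (degree 6) to
`Δv₃` (degree 4) and then to `96 (x + 1)(y + 1)`, which is harmonic.
-/

/-- The discrete Laplacian of the simple walk (steps `(±1,0)`, `(0,±1)`, weight `1/4` each),
defined to be `0` outside the quarter plane. -/
noncomputable def swLap (h : ℤ → ℤ → ℝ) : ℤ → ℤ → ℝ :=
  fun i j =>
    if 0 ≤ i ∧ 0 ≤ j then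
      (h (i + 1) j + h (i - 1) j + h i (j + 1) + h i (j - 1)) / 4 - h i j
    else 0

noncomputable def quadrantExt (F : ℝ → ℝ → ℝ) : ℤ → ℤ → ℝ :=
  fun i j => if 0 ≤ i ∧ 0 ≤ j then F i j else 0

noncomputable def swLapReal (F : ℝ → ℝ → ℝ) : ℝ → ℝ → ℝ :=
  fun x y => (F (x + 1) y + F (x - 1) y + F x (y + 1) + F x (y - 1)) / 4 - F x y

theorem quadrantExt_of_nonneg {F : ℝ → ℝ → ℝ} {i j : ℤ} (hi : 0 ≤ i) (hj : 0 ≤ j) :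
    quadrantExt F i j = F i j :=
  if_pos ⟨hi, hj⟩

section VanishingOnBoundary

variable {F : ℝ → ℝ → ℝ} (hx : ∀ y, F (-1) y = 0) (hy : ∀ x, F x (-1) = 0)
include hx hy

theorem quadrantExt_apply_of_neg_one_le {i j : ℤ} (hi : -1 ≤ i) (hj : -1 ≤ j) :
    quadrantExt F i j = F i j := by
  by_cases h : 0 ≤ i ∧ 0 ≤ j
  · exact quadrantExt_of_nonneg h.1 h.2
  · rw [quadrantExt, if_neg h]
    rcases (show i = -1 ∨ j = -1 by omega) with rfl | rfl <;> simp [hx, hy]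

theorem swLap_quadrantExt : swLap (quadrantExt F) = quadrantExt (swLapReal F) := by
  funext i j
  simp only [swLap]
  split_ifs with h
  · simp (disch := omega) only [quadrantExt_of_nonneg, quadrantExt_apply_of_neg_one_le hx hy]
    push_cast
    rfl
  · rw [quadrantExt, if_neg h]

end VanishingOnBoundary

def v₁Poly (x y : ℝ) : ℝ := (x + 1) * (y + 1)

def v₃Poly (x y : ℝ) : ℝ :=
  (x + 1) * (y + 1) *
    (317 + 16 * x ^ 3 + 4 * x ^ 4 + 168 * y + 100 * y ^ 2 + 16 * y ^ 3 + 4 * y ^ 4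
      + 8 * x * (21 + 4 * y + 2 * y ^ 2) + 4 * x ^ 2 * (25 + 4 * y + 2 * y ^ 2))

def lapV₃Poly (x y : ℝ) : ℝ :=
  (x + 1) * (y + 1) * (288 + 64 * x + 32 * x ^ 2 + 64 * y + 32 * y ^ 2)

theorem swLapReal_v₃Poly : swLapReal v₃Poly = lapV₃Poly := by
  funext x y
  simp only [swLapReal, v₃Poly, lapV₃Poly]
  ring

theorem swLapReal_lapV₃Poly : swLapReal lapV₃Poly = fun x y => 96 * v₁Poly x y := by
  funext x y
  simp only [swLapReal, lapV₃Poly, v₁Poly]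
  ring

theorem swLapReal_const_mul_v₁Poly (c : ℝ) : swLapReal (fun x y => c * v₁Poly x y) = 0 := by
  funext x y
  simp only [swLapReal, v₁Poly, Pi.zero_apply]
  ring

theorem quadrantExt_zero : quadrantExt 0 = 0 := by
  funext i j
  simp [quadrantExt]

theorem simple_walk_v3_triharmonic
    (v₁ v₃ : ℤ → ℤ → ℝ)
    (hv₁ : ∀ i j : ℤ, v₁ i j = if 0 ≤ i ∧ 0 ≤ j then ((i : ℝ) + 1) * ((j : ℝ) + 1) else 0)
    (hv₃ : ∀ i j : ℤ, v₃ i j =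
      if 0 ≤ i ∧ 0 ≤ j then
        ((i : ℝ) + 1) * ((j : ℝ) + 1) *
          (317 + 16 * (i : ℝ) ^ 3 + 4 * (i : ℝ) ^ 4 + 168 * (j : ℝ) + 100 * (j : ℝ) ^ 2
            + 16 * (j : ℝ) ^ 3 + 4 * (j : ℝ) ^ 4
            + 8 * (i : ℝ) * (21 + 4 * (j : ℝ) + 2 * (j : ℝ) ^ 2)
            + 4 * (i : ℝ) ^ 2 * (25 + 4 * (j : ℝ) + 2 * (j : ℝ) ^ 2))
      else 0) :
    (swLap (swLap v₃) = fun i j => 96 * v₁ i j) ∧ swLap (swLap (swLap v₃)) = 0 ∧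
      swLap (swLap v₃) ≠ 0 := by
  have hv₃_ext : v₃ = quadrantExt v₃Poly := funext₂ hv₃
  have hv₁_ext : (fun i j => 96 * v₁ i j) = quadrantExt (fun x y => 96 * v₁Poly x y) := by
    funext i j
    simp [hv₁, quadrantExt, v₁Poly]
  have hΔΔ : swLap (swLap v₃) = quadrantExt (fun x y => 96 * v₁Poly x y) := by
    rw [hv₃_ext, swLap_quadrantExt (by simp [v₃Poly]) (by simp [v₃Poly]), swLapReal_v₃Poly,
      swLap_quadrantExt (by simp [lapV₃Poly]) (by simp [lapV₃Poly]), swLapReal_lapV₃Poly]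
  refine ⟨hΔΔ.trans hv₁_ext.symm, ?_, fun h => ?_⟩
  · rw [hΔΔ, swLap_quadrantExt (by simp [v₁Poly]) (by simp [v₁Poly]),
      swLapReal_const_mul_v₁Poly, quadrantExt_zero]
  · have h₀₀ := congrFun₂ h 0 0
    rw [hΔΔ, quadrantExt_of_nonneg le_rfl le_rfl] at h₀₀
    norm_num [v₁Poly] at h₀₀
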